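/- Fix τ₁ < τ₂, B_Θ > 0, and let r, g, r*, g* : U → ℝ be functions bounded by B_Θ in sup norm. Define q_k(u) = Φ((r(u) - τ_k)e^{-g(u)}) and q_k*(u) = Φ((r*(u) - τ_k)e^{-g*(u)}). Then there exists a constant c > 0, depending only on B_Θ, τ₁, τ₂, such that for every u: |r(u) - r*(u)|² + |g(u) - g*(u)|² ≤ c·(|q₁(u) - q₁*(u)|² + |q₂(u) - q₂*(u)|²). -/

import Mathlib

noncomputable def stdGaussianPDF (t : ℝ) : ℝ :=
  (Real.sqrt (2 * Real.pi))⁻¹ * Real.exp (-t ^ 2 / 2)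

noncomputable def stdGaussianCDF (x : ℝ) : ℝ :=
  ∫ t in Set.Iic x, stdGaussianPDF t

/-!
Write `z_k = (r - τ_k) e^{-g}` for the standardized anchors. On the bounded parameter box the
anchors stay in a compact interval `[-M, M]`, where `Φ` has slope at least `φ M`, so
`|z_k - z_k'| ≤ |q_k - q_k'| / φ M`. The parameters are recovered from the anchors by
`e^{-g} = (z₁ - z₂) / (τ₂ - τ₁)` and `r = τ₁ + z₁ e^g`; since `exp` is bi-Lipschitz on bounded
intervals, this inverse map is Lipschitz on the relevant range.
-/

open Real

lemma stdGaussianPDF_pos (t : ℝ) : 0 < stdGaussianPDF t := by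
  unfold stdGaussianPDF
  positivity

lemma integrable_stdGaussianPDF : MeasureTheory.Integrable stdGaussianPDF := by
  have h := (integrable_exp_neg_mul_sq (b := 1 / 2) (by norm_num)).const_mul (√(2 * π))⁻¹
  convert h using 2 with t
  unfold stdGaussianPDF
  ring_nf

lemma stdGaussianPDF_le_of_abs_le {t M : ℝ} (h : |t| ≤ M) :
    stdGaussianPDF M ≤ stdGaussianPDF t := by
  unfold stdGaussianPDF
  have := sq_le_sq' (abs_le.mp h).1 (abs_le.mp h).2
  gcongr

lemma stdGaussianCDF_sub_stdGaussianCDF (x y : ℝ) :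
    stdGaussianCDF x - stdGaussianCDF y = ∫ t in y..x, stdGaussianPDF t :=
  intervalIntegral.integral_Iic_sub_Iic integrable_stdGaussianPDF.integrableOn
    integrable_stdGaussianPDF.integrableOn

lemma stdGaussianPDF_mul_abs_sub_le {x y M : ℝ} (hx : |x| ≤ M) (hy : |y| ≤ M) :
    stdGaussianPDF M * |x - y| ≤ |stdGaussianCDF x - stdGaussianCDF y| := by
  wlog hyx : y ≤ x generalizing x y
  · rw [abs_sub_comm x, abs_sub_comm (stdGaussianCDF x)]
    exact this hy hx (le_of_not_ge hyx)
  have hmono : stdGaussianPDF M * (x - y) ≤ stdGaussianCDF x - stdGaussianCDF y := by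
    rw [stdGaussianCDF_sub_stdGaussianCDF, mul_comm, ← smul_eq_mul,
      ← intervalIntegral.integral_const]
    refine intervalIntegral.integral_mono_on hyx intervalIntegrable_const
      integrable_stdGaussianPDF.integrableOn.intervalIntegrable fun t ht ↦ ?_
    exact stdGaussianPDF_le_of_abs_le <| abs_le.mpr
      ⟨(abs_le.mp hy).1.trans ht.1, ht.2.trans (abs_le.mp hx).2⟩
  rwa [abs_of_nonneg (sub_nonneg.mpr hyx), abs_of_nonneg
    ((mul_nonneg (stdGaussianPDF_pos M).le (sub_nonneg.mpr hyx)).trans hmono)]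

lemma exp_mul_sub_le_exp_sub_exp (a b : ℝ) : exp b * (a - b) ≤ exp a - exp b := by
  have h := mul_le_mul_of_nonneg_left (add_one_le_exp (a - b)) (exp_pos b).le
  rw [← exp_add, add_sub_cancel] at h
  linarith

lemma abs_exp_sub_exp_le {a b B : ℝ} (ha : a ≤ B) (hb : b ≤ B) :
    |exp a - exp b| ≤ exp B * |a - b| := by
  wlog hba : b ≤ a generalizing a b
  · rw [abs_sub_comm a, abs_sub_comm (exp a)]
    exact this hb ha (le_of_not_ge hba)
  have h := exp_mul_sub_le_exp_sub_exp b a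
  rw [abs_of_nonneg (sub_nonneg.mpr (exp_le_exp.mpr hba)), abs_of_nonneg (sub_nonneg.mpr hba)]
  nlinarith [exp_le_exp.mpr ha]

lemma abs_sub_le_exp_mul_abs_exp_sub {a b B : ℝ} (ha : -B ≤ a) (hb : -B ≤ b) :
    |a - b| ≤ exp B * |exp a - exp b| := by
  wlog hba : b ≤ a generalizing a b
  · rw [abs_sub_comm a, abs_sub_comm (exp a)]
    exact this hb ha (le_of_not_ge hba)
  have h := exp_mul_sub_le_exp_sub_exp a b
  rw [abs_of_nonneg (sub_nonneg.mpr (exp_le_exp.mpr hba)), abs_of_nonneg (sub_nonneg.mpr hba)]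
  have hB : 1 ≤ exp B * exp b := by rw [← exp_add]; exact one_le_exp (by linarith)
  nlinarith [exp_pos B]

/-- `stdGaussianCDF (anchor r g τₖ)` is the anchor probability `qₖ`. -/
noncomputable def anchor (r g τ : ℝ) : ℝ := (r - τ) * exp (-g)

lemma abs_anchor_le {r g τ B T : ℝ} (hr : |r| ≤ B) (hg : |g| ≤ B) (hτ : |τ| ≤ T) :
    |anchor r g τ| ≤ (B + T) * exp B := by
  rw [anchor, abs_mul, abs_of_pos (exp_pos _)]
  have hrτ : |r - τ| ≤ B + T := (abs_sub _ _).trans (add_le_add hr hτ)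
  exact mul_le_mul hrτ (exp_le_exp.mpr (neg_le.mp (abs_le.mp hg).1)) (exp_pos _).le
    ((abs_nonneg _).trans hrτ)

lemma anchor_sub_anchor (r g τ₁ τ₂ : ℝ) :
    anchor r g τ₁ - anchor r g τ₂ = (τ₂ - τ₁) * exp (-g) := by
  unfold anchor; ring

lemma anchor_mul_exp (r g τ : ℝ) : anchor r g τ * exp g = r - τ := by
  rw [anchor, mul_assoc, ← exp_add, neg_add_cancel, exp_zero, mul_one]

section Inverse

variable {r g r' g' τ τ₁ τ₂ B : ℝ}

lemma abs_sub_le_of_anchor_sub (hg : g ≤ B) (hg' : g' ≤ B) :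
    |r - r'| ≤
      exp B * |anchor r g τ - anchor r' g' τ| + |anchor r' g' τ| * (exp B * |g - g'|) :=
  calc |r - r'|
      = |(anchor r g τ - anchor r' g' τ) * exp g + anchor r' g' τ * (exp g - exp g')| := by
        rw [← sub_sub_sub_cancel_right r r' τ, ← anchor_mul_exp r g, ← anchor_mul_exp r' g']
        ring_nf
    _ ≤ |anchor r g τ - anchor r' g' τ| * exp g + |anchor r' g' τ| * |exp g - exp g'| := by
        refine (abs_add_le _ _).trans_eq ?_
        rw [abs_mul, abs_mul, abs_of_pos (exp_pos g)]
    _ ≤ exp B * |anchor r g τ - anchor r' g' τ| + |anchor r' g' τ| * (exp B * |g - g'|) := by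
        rw [mul_comm (exp B)]
        gcongr
        exact abs_exp_sub_exp_le hg hg'

lemma abs_sub_le_of_two_anchor_sub (hτ : τ₁ < τ₂) (hg : g ≤ B) (hg' : g' ≤ B) :
    |g - g'| ≤ exp B / (τ₂ - τ₁) *
      (|anchor r g τ₁ - anchor r' g' τ₁| + |anchor r g τ₂ - anchor r' g' τ₂|) := by
  have hτ' : 0 < τ₂ - τ₁ := sub_pos.mpr hτ
  have hdiff : (anchor r g τ₁ - anchor r' g' τ₁) - (anchor r g τ₂ - anchor r' g' τ₂)
      = (τ₂ - τ₁) * (exp (-g) - exp (-g')) := by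
    rw [sub_sub_sub_comm, anchor_sub_anchor, anchor_sub_anchor, mul_sub]
  calc |g - g'| = |-g - -g'| := by rw [← abs_neg]; ring_nf
    _ ≤ exp B * |exp (-g) - exp (-g')| :=
        abs_sub_le_exp_mul_abs_exp_sub (by linarith) (by linarith)
    _ = exp B / (τ₂ - τ₁) *
          |(anchor r g τ₁ - anchor r' g' τ₁) - (anchor r g τ₂ - anchor r' g' τ₂)| := by
        rw [hdiff, abs_mul, abs_of_pos hτ']
        field_simp
    _ ≤ _ := by gcongr; exact abs_sub _ _

lemma abs_sub_add_abs_sub_le_of_two_anchor_sub (hτ : τ₁ < τ₂) (hr' : |r'| ≤ B)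
    (hg : |g| ≤ B) (hg' : |g'| ≤ B) :
    |r - r'| + |g - g'| ≤ (exp B + (1 + (B + |τ₁|) * exp B * exp B) * (exp B / (τ₂ - τ₁))) *
      (|anchor r g τ₁ - anchor r' g' τ₁| + |anchor r g τ₂ - anchor r' g' τ₂|) := by
  have hB : 0 ≤ B := (abs_nonneg g).trans hg
  have hw := abs_anchor_le (τ := τ₁) hr' hg' le_rfl
  have hrd := abs_sub_le_of_anchor_sub (r := r) (r' := r') (τ := τ₁)
    (abs_le.mp hg).2 (abs_le.mp hg').2
  have hgd := abs_sub_le_of_two_anchor_sub (r := r) (r' := r') hτ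
    (abs_le.mp hg).2 (abs_le.mp hg').2
  calc |r - r'| + |g - g'|
      ≤ exp B * |anchor r g τ₁ - anchor r' g' τ₁| +
          (1 + (B + |τ₁|) * exp B * exp B) * |g - g'| := by
        linarith [mul_le_mul_of_nonneg_right hw (mul_nonneg (exp_pos B).le (abs_nonneg (g - g')))]
    _ ≤ exp B * (|anchor r g τ₁ - anchor r' g' τ₁| + |anchor r g τ₂ - anchor r' g' τ₂|) +
          (1 + (B + |τ₁|) * exp B * exp B) * (exp B / (τ₂ - τ₁) *
            (|anchor r g τ₁ - anchor r' g' τ₁| + |anchor r g τ₂ - anchor r' g' τ₂|)) := by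
        gcongr
        exact le_add_of_nonneg_right (abs_nonneg _)
    _ = _ := by ring

end Inverse

lemma sq_add_sq_le_of_abs_add_abs_le {a b x y p q K m : ℝ} (hm : 0 < m)
    (hab : |a| + |b| ≤ K * (|x| + |y|)) (hx : m * |x| ≤ |p|) (hy : m * |y| ≤ |q|) :
    |a| ^ 2 + |b| ^ 2 ≤ 2 * K ^ 2 / m ^ 2 * (|p| ^ 2 + |q| ^ 2) := by
  rw [div_mul_eq_mul_div, le_div_iff₀ (by positivity)]
  calc (|a| ^ 2 + |b| ^ 2) * m ^ 2
      ≤ (|a| + |b|) ^ 2 * m ^ 2 := by gcongr; nlinarith [abs_nonneg a, abs_nonneg b]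
    _ ≤ (K * (|x| + |y|)) ^ 2 * m ^ 2 := by gcongr
    _ = K ^ 2 * (m * |x| + m * |y|) ^ 2 := by ring
    _ ≤ K ^ 2 * (2 * ((m * |x|) ^ 2 + (m * |y|) ^ 2)) := by gcongr; exact add_sq_le
    _ = 2 * K ^ 2 * ((m * |x|) ^ 2 + (m * |y|) ^ 2) := by ring
    _ ≤ 2 * K ^ 2 * (|p| ^ 2 + |q| ^ 2) := by gcongr

theorem two_anchor_inverse_lipschitz (τ₁ τ₂ B : ℝ) (hτ : τ₁ < τ₂) (hB : 0 < B) :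
    ∃ c > 0, ∀ (U : Type) (r g r' g' : U → ℝ),
      (∀ u, |r u| ≤ B) → (∀ u, |g u| ≤ B) →
      (∀ u, |r' u| ≤ B) → (∀ u, |g' u| ≤ B) →
      ∀ u : U,
        |r u - r' u| ^ 2 + |g u - g' u| ^ 2
          ≤ c * (|stdGaussianCDF ((r u - τ₁) * Real.exp (-(g u)))
                    - stdGaussianCDF ((r' u - τ₁) * Real.exp (-(g' u)))| ^ 2
                + |stdGaussianCDF ((r u - τ₂) * Real.exp (-(g u)))
                    - stdGaussianCDF ((r' u - τ₂) * Real.exp (-(g' u)))| ^ 2) := by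
  set m := stdGaussianPDF ((B + max |τ₁| |τ₂|) * exp B)
  have hm : 0 < m := stdGaussianPDF_pos _
  have hL : 0 < exp B / (τ₂ - τ₁) := div_pos (exp_pos B) (sub_pos.mpr hτ)
  set K := exp B + (1 + (B + |τ₁|) * exp B * exp B) * (exp B / (τ₂ - τ₁))
  have hK : 0 < K := by positivity
  refine ⟨2 * K ^ 2 / m ^ 2, by positivity, fun U r g r' g' hr hg hr' hg' u ↦ ?_⟩
  have hΦ : ∀ τ, |τ| ≤ max |τ₁| |τ₂| →
      m * |anchor (r u) (g u) τ - anchor (r' u) (g' u) τ| ≤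
        |stdGaussianCDF (anchor (r u) (g u) τ) - stdGaussianCDF (anchor (r' u) (g' u) τ)| :=
    fun τ hτ ↦ stdGaussianPDF_mul_abs_sub_le (abs_anchor_le (hr u) (hg u) hτ)
      (abs_anchor_le (hr' u) (hg' u) hτ)
  exact sq_add_sq_le_of_abs_add_abs_le hm
    (abs_sub_add_abs_sub_le_of_two_anchor_sub hτ (hr' u) (hg u) (hg' u))
    (hΦ τ₁ (le_max_left _ _)) (hΦ τ₂ (le_max_right _ _))
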